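/- arXiv:math/0604297 — 3 statements merged into one kernel-verified Lean document; each statement's English description precedes it below -/
import Mathlib

section
/- The formal power series w(x) = Σ_{m≥1} m^{m-1} x^m / m! (the exponential generating function for rooted labelled trees) satisfies the functional equation w(x) = x · e^{w(x)} as formal power series over ℚ. -/
open PowerSeries

/-- The formal exponential `e^w = ∑_{k≥0} w^k / k!` of a power series `w`
with zero constant term (coefficientwise, the sum is finite in each degree). -/
noncomputable def expOf (w : PowerSeries ℚ) : PowerSeries ℚ :=
  PowerSeries.mk fun n => ∑ k ∈ Finset.range (n + 1),
    ((k.factorial : ℚ))⁻¹ * PowerSeries.coeff n (w ^ k)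

/-- The rooted tree series `w(x) = ∑_{m ≥ 1} m^(m-1) x^m / m!`. -/
noncomputable def treeSeries : PowerSeries ℚ :=
  PowerSeries.mk fun m => if m = 0 then 0 else (m : ℚ) ^ (m - 1) / m.factorial

/-- `abelA x k = x * (x+k)^(k-1)` with the convention `abelA x 0 = 1`. -/
private def abelA (x : ℚ) : ℕ → ℚ
  | 0 => 1
  | (k+1) => x * (x + (k+1 : ℕ)) ^ k

private lemma abelA_zero (x : ℚ) : abelA x 0 = 1 := rfl
private lemma abelA_succ (x : ℚ) (k : ℕ) : abelA x (k+1) = x * (x + (k+1 : ℕ)) ^ k := rfl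

private lemma pow_split (y : ℚ) (m : ℕ) :
    (y + (m : ℕ)) ^ m = abelA y m + m * (y + (m : ℕ)) ^ (m - 1) := by
  cases m with
  | zero => simp [abelA]
  | succ m =>
    rw [abelA_succ]
    push_cast
    simp only [Nat.add_sub_cancel, pow_succ']
    ring

private lemma choose_sub_mul (n k : ℕ) :
    (((n+1).choose k : ℕ) : ℚ) * (((n + 1 - k : ℕ)) : ℚ) = ((n+1 : ℕ) : ℚ) * ((n.choose k : ℕ) : ℚ) := by
  have h : ((n.choose k * (n+1) : ℕ) : ℚ) = (((n+1).choose k * (n+1-k) : ℕ) : ℚ) := by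
    exact_mod_cast congrArg (fun m : ℕ => (m : ℚ)) (Nat.choose_mul_succ_eq n k)
  rw [Nat.cast_mul, Nat.cast_mul] at h
  linarith

private theorem abelF (n : ℕ) : ∀ x y : ℚ,
    ∑ k ∈ Finset.range (n+1),
      (n.choose k : ℚ) * abelA x k * (y + ((n - k : ℕ) : ℚ)) ^ (n - k)
      = (x + y + n) ^ n := by
  induction n with
  | zero => intro x y; simp [abelA]
  | succ n ih =>
    intro x y
    have step1 : ∀ k ∈ Finset.range (n+2),
        ((n+1).choose k : ℚ) * abelA x k * (y + ((n+1-k : ℕ) : ℚ)) ^ (n+1-k)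
        = ((n+1).choose k : ℚ) * abelA x k * abelA y (n+1-k)
          + ((n+1).choose k : ℚ) * ((n+1-k : ℕ) : ℚ) * abelA x k
            * (y + ((n+1-k : ℕ) : ℚ)) ^ (n+1-k-1) := by
      intro k _
      rw [pow_split y (n+1-k)]
      ring
    rw [Finset.sum_congr rfl step1, Finset.sum_add_distrib]
    have S2 : ∑ k ∈ Finset.range (n+2),
        ((n+1).choose k : ℚ) * ((n+1-k : ℕ) : ℚ) * abelA x k
          * (y + ((n+1-k : ℕ) : ℚ)) ^ (n+1-k-1)
        = (n+1 : ℚ) * (x + (y+1) + n) ^ n := by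
      rw [Finset.sum_range_succ]
      simp only [Nat.sub_self, Nat.cast_zero, mul_zero, zero_mul, mul_assoc]
      rw [add_zero]
      have : ∀ k ∈ Finset.range (n+1),
          ((n+1).choose k : ℚ) * (((n+1-k : ℕ) : ℚ) * (abelA x k
            * (y + ((n+1-k : ℕ) : ℚ)) ^ (n+1-k-1)))
          = (n+1 : ℚ) * ((n.choose k : ℚ) * abelA x k * ((y+1) + ((n-k : ℕ) : ℚ)) ^ (n-k)) := by
        intro k hk
        rw [Finset.mem_range] at hk
        have h1 : n + 1 - k - 1 = n - k := by omega
        have h2 : ((n+1-k : ℕ) : ℚ) = ((n-k : ℕ) : ℚ) + 1 := by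
          rw [Nat.cast_sub (by omega), Nat.cast_sub (by omega)]; push_cast; ring
        have h3 : y + ((n+1-k : ℕ) : ℚ) = (y+1) + ((n-k : ℕ) : ℚ) := by rw [h2]; ring
        rw [h1, h3, ← mul_assoc, choose_sub_mul n k]
        push_cast
        ring
      rw [Finset.sum_congr rfl this, ← Finset.mul_sum, ih x (y+1)]
    rw [S2]
    have SG : ∑ k ∈ Finset.range (n+2),
        ((n+1).choose k : ℚ) * abelA x k * abelA y (n+1-k)
        = y * (x + (y+1) + n) ^ n + x * (y + (x+1) + n) ^ n := by
      rw [Finset.sum_range_succ']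
      have pascal : ∀ k ∈ Finset.range (n+1),
          ((n+1).choose (k+1) : ℚ) * abelA x (k+1) * abelA y (n+1-(k+1))
          = (n.choose k : ℚ) * abelA x (k+1) * abelA y (n-k)
            + (n.choose (k+1) : ℚ) * abelA x (k+1) * abelA y (n-k) := by
        intro k hk
        have : n + 1 - (k+1) = n - k := by omega
        rw [this, Nat.choose_succ_succ]
        push_cast
        ring
      rw [Finset.sum_congr rfl pascal, Finset.sum_add_distrib]
      have hV : (∑ k ∈ Finset.range (n+1),
            (n.choose (k+1) : ℚ) * abelA x (k+1) * abelA y (n-k))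
          + ((n+1).choose 0 : ℚ) * abelA x 0 * abelA y (n+1-0)
          = y * (x + (y+1) + n) ^ n := by
        have e1 : (∑ k ∈ Finset.range (n+1),
              (n.choose (k+1) : ℚ) * abelA x (k+1) * abelA y (n-k))
            + ((n+1).choose 0 : ℚ) * abelA x 0 * abelA y (n+1-0)
            = ∑ k ∈ Finset.range (n+2), (n.choose k : ℚ) * abelA x k * abelA y (n+1-k) := by
          rw [Finset.sum_range_succ' (fun k => (n.choose k : ℚ) * abelA x k * abelA y (n+1-k)) (n+1)]
          congr 1
          · apply Finset.sum_congr rfl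
            intro k hk
            have : n + 1 - (k+1) = n - k := by omega
            rw [this]
          · simp
        rw [e1, Finset.sum_range_succ, Nat.choose_succ_self]
        simp only [Nat.cast_zero, zero_mul, add_zero]
        have e2 : ∀ k ∈ Finset.range (n+1),
            (n.choose k : ℚ) * abelA x k * abelA y (n+1-k)
            = y * ((n.choose k : ℚ) * abelA x k * ((y+1) + ((n-k : ℕ) : ℚ)) ^ (n-k)) := by
          intro k hk
          rw [Finset.mem_range] at hk
          have h1 : n + 1 - k = (n - k) + 1 := by omega
          rw [h1, abelA_succ]
          have h2 : y + ((n - k + 1 : ℕ) : ℚ) = (y+1) + ((n-k : ℕ) : ℚ) := by push_cast; ring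
          rw [h2]
          ring
        rw [Finset.sum_congr rfl e2, ← Finset.mul_sum, ih x (y+1)]
      have hU : ∑ k ∈ Finset.range (n+1),
            (n.choose k : ℚ) * abelA x (k+1) * abelA y (n-k)
          = x * (y + (x+1) + n) ^ n := by
        rw [← Finset.sum_range_reflect
          (fun k => (n.choose k : ℚ) * abelA x (k+1) * abelA y (n-k)) (n+1)]
        have e3 : ∀ k ∈ Finset.range (n+1),
            (n.choose (n+1-1-k) : ℚ) * abelA x (n+1-1-k+1) * abelA y (n-(n+1-1-k))
            = x * ((n.choose k : ℚ) * abelA y k * ((x+1) + ((n-k : ℕ) : ℚ)) ^ (n-k)) := by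
          intro k hk
          rw [Finset.mem_range] at hk
          have h1 : n + 1 - 1 - k = n - k := by omega
          have h2 : n - (n - k) = k := by omega
          have h3 : n - k + 1 = n + 1 - k := by omega
          rw [h1, h2, Nat.choose_symm (by omega), abelA_succ]
          have h4 : x + ((n - k + 1 : ℕ) : ℚ) = (x+1) + ((n-k : ℕ) : ℚ) := by push_cast; ring
          rw [h4]
          ring
        rw [Finset.sum_congr rfl e3, ← Finset.mul_sum, ih y (x+1)]
      linarith [hV]
    rw [SG]
    push_cast
    ring

private lemma abelA_one (m : ℕ) :
    abelA 1 m = ((m+1 : ℕ) : ℚ) ^ m / ((m+1 : ℕ) : ℚ) := by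
  cases m with
  | zero => simp [abelA]
  | succ m =>
    rw [abelA_succ]
    have h : ((m+1+1 : ℕ) : ℚ) ≠ 0 := by positivity
    push_cast at h ⊢
    rw [pow_succ]
    field_simp
    ring_nf

private lemma keyQ (M : ℕ) :
    ∑ j ∈ Finset.range (M+1), ((j+1 : ℕ) : ℚ) ^ j / (j.factorial : ℚ)
        * (((M-j+1 : ℕ) : ℚ) ^ (M-j) / (((M-j+1).factorial : ℚ)))
      = ((M+2 : ℕ) : ℚ) ^ (M+1) / (((M+2).factorial : ℚ)) * ((M+1 : ℕ) : ℚ) := by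
  have habel := abelF M 1 1
  set f : ℕ → ℚ := fun k =>
    (M.choose k : ℚ) * abelA 1 k * (1 + ((M - k : ℕ) : ℚ)) ^ (M - k) with hf
  have hrefl : ∑ j ∈ Finset.range (M+1), f (M - j) = ∑ j ∈ Finset.range (M+1), f j := by
    rw [← Finset.sum_range_reflect f (M+1)]
    apply Finset.sum_congr rfl
    intro j hj
    congr 1
  have hterm : ∀ j ∈ Finset.range (M+1),
      ((j+1 : ℕ) : ℚ) ^ j / (j.factorial : ℚ)
        * (((M-j+1 : ℕ) : ℚ) ^ (M-j) / (((M-j+1).factorial : ℚ)))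
      = ((M.factorial : ℕ) : ℚ)⁻¹ * f (M - j) := by
    intro j hj
    rw [Finset.mem_range] at hj
    have hj' : j ≤ M := by omega
    rw [hf]
    simp only
    rw [Nat.choose_symm hj', abelA_one]
    have h2 : M - (M - j) = j := by omega
    rw [h2]
    rw [Nat.cast_choose ℚ hj']
    have e1 : (M - j) + 1 = (M - j + 1) := rfl
    rw [show (M-j+1).factorial = (M-j+1) * (M-j).factorial from Nat.factorial_succ _]
    have nz1 : ((j.factorial : ℕ) : ℚ) ≠ 0 := by exact_mod_cast j.factorial_ne_zero
    have nz2 : (((M-j).factorial : ℕ) : ℚ) ≠ 0 := by exact_mod_cast (M-j).factorial_ne_zero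
    have nz3 : ((M.factorial : ℕ) : ℚ) ≠ 0 := by exact_mod_cast M.factorial_ne_zero
    have nz4 : ((M-j+1 : ℕ) : ℚ) ≠ 0 := by positivity
    have hc : ((j+1 : ℕ) : ℚ) = 1 + (j : ℚ) := by push_cast; ring
    rw [Nat.cast_mul, hc]
    revert nz1 nz2 nz3 nz4
    generalize ((j.factorial : ℚ)) = a
    generalize (((M-j).factorial : ℚ)) = b
    generalize ((M.factorial : ℚ)) = c
    generalize (((M-j+1 : ℕ) : ℚ)) = d
    intro nz1 nz2 nz3 nz4
    field_simp
  rw [Finset.sum_congr rfl hterm, ← Finset.mul_sum, hrefl, habel]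
  have nz5 : (((M+2).factorial : ℕ) : ℚ) ≠ 0 := by exact_mod_cast (M+2).factorial_ne_zero
  have nz3 : ((M.factorial : ℕ) : ℚ) ≠ 0 := by exact_mod_cast M.factorial_ne_zero
  rw [show (M+2).factorial = (M+2) * ((M+1) * M.factorial) by
    rw [Nat.factorial_succ, Nat.factorial_succ]]
  push_cast
  rw [pow_succ]
  field_simp
  ring

private lemma tree_const : constantCoeff treeSeries = 0 := by
  rw [treeSeries, ← coeff_zero_eq_constantCoeff]
  simp

private lemma coeff_treeSeries_succ (m : ℕ) :
    coeff (m+1) treeSeries = ((m+1 : ℕ) : ℚ) ^ m / (((m+1).factorial : ℕ) : ℚ) := by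
  rw [treeSeries, coeff_mk]
  simp

private lemma coeff_pow_eq_zero {w : PowerSeries ℚ} (hw : constantCoeff w = 0)
    {k N : ℕ} (h : N < k) : coeff N (w ^ k) = 0 := by
  have hd : (X : PowerSeries ℚ) ^ k ∣ w ^ k := pow_dvd_pow_of_dvd (X_dvd_iff.mpr hw) k
  exact (X_pow_dvd_iff.mp hd) N h

private lemma coeff_expOf_stable {w : PowerSeries ℚ} (hw : constantCoeff w = 0)
    {N M : ℕ} (h : N < M) :
    coeff N (expOf w) = ∑ k ∈ Finset.range M,
      ((k.factorial : ℚ))⁻¹ * coeff N (w ^ k) := by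
  rw [expOf, coeff_mk]
  apply Finset.sum_subset
  · intro k hk
    rw [Finset.mem_range] at *
    omega
  · intro k hk hk'
    rw [Finset.mem_range] at *
    rw [coeff_pow_eq_zero hw (by omega), mul_zero]

private lemma deriv_expOf {w : PowerSeries ℚ} (hw : constantCoeff w = 0) :
    PowerSeries.derivative ℚ (expOf w)
      = PowerSeries.derivative ℚ w * expOf w := by
  ext N
  rw [coeff_derivative]
  rw [coeff_expOf_stable hw (show N+1 < N+2 by omega), Finset.sum_mul]
  have e1 : ∀ k ∈ Finset.range (N+2),
      ((k.factorial : ℚ))⁻¹ * coeff (N+1) (w ^ k) * (N+1)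
      = ((k.factorial : ℚ))⁻¹ * (k * coeff N (w ^ (k-1) * PowerSeries.derivative ℚ w)) := by
    intro k _
    have : coeff (N+1) (w ^ k) * (N+1) = coeff N (PowerSeries.derivative ℚ (w ^ k)) := by
      rw [coeff_derivative]
    have lp : PowerSeries.derivative ℚ (w ^ k)
        = k • (w ^ (k-1) * PowerSeries.derivative ℚ w) := by
      rw [Derivation.leibniz_pow, smul_eq_mul]
    rw [mul_assoc, this, lp, map_nsmul, nsmul_eq_mul]
  rw [Finset.sum_congr rfl e1, Finset.sum_range_succ']
  simp only [Nat.cast_zero, zero_mul, mul_zero, add_zero]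
  have e2 : ∀ k ∈ Finset.range (N+1),
      (((k+1).factorial : ℚ))⁻¹ * ((((k+1) : ℕ) : ℚ) * coeff N (w ^ (k+1-1) * PowerSeries.derivative ℚ w))
      = ((k.factorial : ℚ))⁻¹ * coeff N (PowerSeries.derivative ℚ w * w ^ k) := by
    intro k _
    rw [Nat.add_sub_cancel, Nat.factorial_succ, mul_comm (w ^ k)]
    push_cast
    rw [mul_inv]
    have : ((k : ℚ) + 1) ≠ 0 := by positivity
    field_simp
  rw [Finset.sum_congr rfl e2]
  rw [coeff_mul]
  have e3 : ∀ p ∈ Finset.HasAntidiagonal.antidiagonal N,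
      coeff p.1 (PowerSeries.derivative ℚ w) * coeff p.2 (expOf w)
      = ∑ k ∈ Finset.range (N+1), ((k.factorial : ℚ))⁻¹ *
          (coeff p.1 (PowerSeries.derivative ℚ w) * coeff p.2 (w ^ k)) := by
    intro p hp
    rw [Finset.HasAntidiagonal.mem_antidiagonal] at hp
    rw [coeff_expOf_stable hw (show p.2 < N + 1 by omega), Finset.mul_sum]
    apply Finset.sum_congr rfl
    intro k _
    ring
  rw [Finset.sum_congr rfl e3, Finset.sum_comm]
  apply Finset.sum_congr rfl
  intro k _
  rw [coeff_mul, Finset.mul_sum]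

private lemma coeff_expOf_tree (N : ℕ) :
    coeff N (expOf treeSeries) = ((N+1 : ℕ) : ℚ) ^ N / (((N+1).factorial : ℕ) : ℚ) := by
  induction N using Nat.strong_induction_on with
  | _ N ih =>
    match N with
    | 0 => simp [expOf]
    | (M+1) =>
      have hD := congrArg (coeff M) (deriv_expOf tree_const)
      rw [coeff_derivative, coeff_mul,
        Finset.Nat.sum_antidiagonal_eq_sum_range_succ_mk] at hD
      have e : ∀ j ∈ Finset.range (M+1),
          coeff j (PowerSeries.derivative ℚ treeSeries) * coeff (M-j) (expOf treeSeries)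
          = ((j+1 : ℕ) : ℚ) ^ j / (j.factorial : ℚ)
              * (((M-j+1 : ℕ) : ℚ) ^ (M-j) / (((M-j+1).factorial : ℚ))) := by
        intro j hj
        rw [Finset.mem_range] at hj
        rw [coeff_derivative, coeff_treeSeries_succ, ih (M-j) (by omega)]
        rw [show (j+1).factorial = (j+1) * j.factorial from Nat.factorial_succ _]
        have nz1 : ((j.factorial : ℕ) : ℚ) ≠ 0 := by exact_mod_cast j.factorial_ne_zero
        have nz2 : ((j : ℚ) + 1) ≠ 0 := by positivity
        push_cast
        field_simp
      rw [Finset.sum_congr rfl e, keyQ] at hD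
      have hM : ((M : ℚ) + 1) ≠ 0 := by positivity
      show coeff (M+1) (expOf treeSeries)
          = ((M+2 : ℕ) : ℚ) ^ (M+1) / (((M+2).factorial : ℕ) : ℚ)
      push_cast at hD ⊢
      apply mul_right_cancel₀ hM
      linarith [hD]

theorem treeSeries_eq_X_mul_exp : treeSeries = PowerSeries.X * expOf treeSeries := by
  ext n
  cases n with
  | zero =>
    rw [coeff_zero_X_mul, treeSeries, coeff_mk]
    simp
  | succ N =>
    rw [coeff_succ_X_mul, coeff_treeSeries_succ, coeff_expOf_tree]
end

section
/- Let w = Σ_{m≥1} m^{m-1} x^m/m! be the rooted tree series and define y = (1 - w)^{-1} in ℚ[[x]]. Then y = 1 + Σ_{m≥1} m^m x^m / m!. -/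
section AuxAbel
open Finset fwdDiff Polynomial

lemma my_fwdDiff_pow_eq_zero {R : Type*} [CommRing R] : ∀ (m n : ℕ), m < n →
    (fwdDiff (1:R))^[n] (fun t : R => t ^ m) = 0 := by
  intro m
  induction m using Nat.strong_induction_on with
  | _ m IH =>
    intro n hmn
    obtain ⟨n', rfl⟩ : ∃ n', n = n' + 1 := ⟨n - 1, by omega⟩
    have hstep : fwdDiff (1:R) (fun t : R => t ^ m)
        = ∑ j ∈ range m, (m.choose j) • (fun t : R => t ^ j) := by
      funext t
      simp only [fwdDiff, Finset.sum_apply, Pi.smul_apply, smul_eq_mul]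
      rw [add_pow]
      simp only [one_pow, mul_one]
      rw [Finset.sum_range_succ]
      simp [mul_comm]
    rw [Function.iterate_succ_apply, hstep, fwdDiff_iter_finset_sum]
    refine Finset.sum_eq_zero fun j hj => ?_
    have hj' := mem_range.mp hj
    rw [fwdDiff_iter_const_smul, IH j (mem_range.mp hj) n' (by omega)]
    simp

lemma my_alt_sum_pow {R : Type*} [CommRing R] (n : ℕ) (y : R) :
    ∑ k ∈ range (n+2), (-1:R)^(n+1-k) * ((n+1).choose k) * (y + k)^n = 0 := by
  have h := fwdDiff_iter_eq_sum_shift (1:R) (fun t : R => t ^ n) (n+1) y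
  rw [my_fwdDiff_pow_eq_zero n (n+1) (by omega)] at h
  simp only [Pi.zero_apply, zsmul_eq_mul, smul_eq_mul, nsmul_eq_mul, mul_one] at h
  push_cast at h
  rw [show n+2 = n+1+1 from rfl, eq_comm, h]


noncomputable def gg (k : ℕ) : Polynomial ℚ :=
  if k = 0 then 1 else X * (X + (k : ℚ[X])) ^ (k - 1)

noncomputable def FF (n : ℕ) (d : ℚ) : Polynomial ℚ[X] :=
  ∑ k ∈ range (n+1), C (C ((n.choose k : ℚ)) * gg k) * (X + C (C (d - k))) ^ (n - k)

theorem FF_eq : ∀ (n : ℕ) (d : ℚ), FF n d = (X + C (X + C d)) ^ n := by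
  intro n
  induction n with
  | zero => intro d; simp [FF, gg]
  | succ n IH =>
    intro d
    have hchoose : ∀ k, k ≤ n → (((n+1).choose k : ℚ)) * ((n+1-k : ℕ) : ℚ)
        = ((n:ℚ)+1) * (n.choose k : ℚ) := by
      intro k hk
      have h := congrArg (Nat.cast : ℕ → ℚ) (Nat.choose_mul_succ_eq n k)
      push_cast at h ⊢
      linarith
    have key : ∀ k ∈ range (n+1),
        derivative (C (C (((n+1).choose k : ℚ)) * gg k) * (X + C (C (d - k))) ^ (n+1-k))
        = C (C ((n:ℚ)+1)) * (C (C ((n.choose k : ℚ)) * gg k) * (X + C (C (d - k))) ^ (n-k)) := by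
      intro k hk
      have hk' : k ≤ n := by have := mem_range.mp hk; omega
      rw [derivative_mul, derivative_C, zero_mul, zero_add, derivative_pow,
        derivative_add, derivative_X, derivative_C, add_zero, mul_one]
      have e2 : (n+1) - k - 1 = n - k := by omega
      rw [e2]
      have hcast : ((n+1-k : ℕ) : ℚ[X]) = C ((n+1-k : ℕ) : ℚ) := by
        simp [map_natCast]
      have inner : C (((n+1).choose k : ℚ)) * gg k * C ((n+1-k : ℕ) : ℚ)
          = C ((n:ℚ)+1) * (C ((n.choose k : ℚ)) * gg k) := by
        have h3 := congrArg (C : ℚ → ℚ[X]) (hchoose k hk')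
        simp only [map_mul] at h3
        linear_combination gg k * h3
      have inner2 := congrArg (C : ℚ[X] → ℚ[X][X]) inner
      rw [hcast]
      simp only [map_mul] at inner2 ⊢
      linear_combination ((X + C (C (d - (k:ℚ)))) ^ (n-k)) * inner2
    have hd : derivative (FF (n+1) d) = derivative ((X + C (X + C d)) ^ (n+1)) := by
      rw [FF, map_sum, sum_range_succ]
      rw [show (n+1) - (n+1) = 0 from by omega, pow_zero, mul_one, derivative_C, add_zero]
      rw [Finset.sum_congr rfl key, ← Finset.mul_sum]
      have hFF : (∑ k ∈ range (n+1), C (C ((n.choose k : ℚ)) * gg k) * (X + C (C (d - k))) ^ (n-k))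
          = FF n d := by rw [FF]
      rw [hFF, IH d]
      rw [derivative_pow, derivative_add, derivative_X, derivative_C, add_zero, mul_one]
      rw [show n+1-1 = n from rfl]
      congr 1
      push_cast
      simp [map_natCast]
    set t : ℚ[X] := -(X + C d) with ht
    have hG : derivative (FF (n+1) d - (X + C (X + C d)) ^ (n+1)) = 0 := by
      rw [derivative_sub, hd, sub_self]
    have hGC := eq_C_of_derivative_eq_zero hG
    have hevalR : eval t ((X + C (X + C d)) ^ (n+1)) = 0 := by
      rw [eval_pow, eval_add, eval_X, eval_C, ht]
      ring_nf
    have hevalF : eval t (FF (n+1) d) = 0 := by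
      rw [FF, eval_finset_sum]
      have hterm : ∀ k ∈ range (n+2),
          eval t (C (C (((n+1).choose k : ℚ)) * gg k) * (X + C (C (d - k))) ^ (n+1-k))
          = X * ((-1:ℚ[X])^(n+1-k) * (((n+1).choose k : ℚ[X])) * (X + (k:ℚ[X]))^n) := by
        intro k hk
        have hk2 : k ≤ n + 1 := by have := mem_range.mp hk; omega
        rw [eval_mul, eval_C, eval_pow, eval_add, eval_X, eval_C]
        have harg : t + C (d - (k:ℚ)) = -(X + (k:ℚ[X])) := by
          rw [ht, map_sub, map_natCast]
          ring
        rw [harg, neg_pow]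
        rcases Nat.eq_zero_or_pos k with rfl | hkpos
        · simp only [gg, if_pos rfl, mul_one, Nat.cast_zero, add_zero]
          rw [show n+1-0 = n+1 from rfl]
          rw [map_natCast]
          norm_num
          ring
        · rw [gg, if_neg (by omega)]
          rw [map_natCast]
          have hexp : (X + (k:ℚ[X]))^(k-1) * (X + (k:ℚ[X]))^(n+1-k) = (X + (k:ℚ[X]))^n := by
            rw [← pow_add]
            congr 1
            omega
          calc (((n+1).choose k : ℚ[X])) * (X * (X + (k:ℚ[X]))^(k-1)) *
                ((-1:ℚ[X])^(n+1-k) * (X + (k:ℚ[X]))^(n+1-k))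
              = X * ((-1:ℚ[X])^(n+1-k) * (((n+1).choose k : ℚ[X])) *
                  ((X + (k:ℚ[X]))^(k-1) * (X + (k:ℚ[X]))^(n+1-k))) := by ring
            _ = _ := by rw [hexp]
      rw [show n+1+1 = n+2 from rfl, Finset.sum_congr rfl hterm, ← Finset.mul_sum,
        my_alt_sum_pow n (X : ℚ[X]), mul_zero]
    have ha : FF (n+1) d - (X + C (X + C d)) ^ (n+1) = 0 := by
      rw [hGC]
      have : eval t (FF (n+1) d - (X + C (X + C d)) ^ (n+1)) = 0 := by
        rw [eval_sub, hevalF, hevalR, sub_zero]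
      rw [hGC, eval_C] at this
      rw [this, map_zero]
    exact sub_eq_zero.mp ha

lemma coeff1_gg (k : ℕ) : (gg k).coeff 1 = if k = 0 then 0 else (k:ℚ)^(k-1) := by
  rcases Nat.eq_zero_or_pos k with rfl | hk
  · simp [gg, coeff_one]
  · rw [gg, if_neg (by omega), if_neg (by omega)]
    rw [show (1:ℕ) = 0 + 1 from rfl, coeff_X_mul]
    rw [← C_eq_natCast, coeff_X_add_C_pow]
    simp

lemma key_identity (n : ℕ) :
    ∑ k ∈ range (n+1), (if k = 0 then 0 else
      (n.choose k : ℚ) * (k:ℚ)^(k-1) * ((n:ℚ) - k)^(n-k)) = (n:ℚ)^(n-1) * n := by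
  have h := congrArg (fun p => (Polynomial.eval (0 : ℚ[X]) p).coeff 1) (FF_eq n (n:ℚ))
  simp only [FF] at h
  rw [eval_finset_sum] at h
  have hL : ∀ k ∈ range (n+1),
      eval (0:ℚ[X]) (C (C ((n.choose k : ℚ)) * gg k) * (X + C (C ((n:ℚ) - k))) ^ (n - k))
      = C ((n.choose k : ℚ) * ((n:ℚ) - k)^(n-k)) * gg k := by
    intro k hk
    rw [eval_mul, eval_C, eval_pow, eval_add, eval_X, eval_C, zero_add, ← map_pow, map_mul]
    ring
  rw [Finset.sum_congr rfl hL] at h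
  simp only [eval_pow, eval_add, eval_X, eval_C, zero_add] at h
  rw [finset_sum_coeff] at h
  simp only [coeff_C_mul, coeff1_gg] at h
  rw [coeff_X_add_C_pow] at h
  simp only [Nat.choose_one_right] at h
  rw [← h]
  refine Finset.sum_congr rfl fun k hk => ?_
  rcases Nat.eq_zero_or_pos k with rfl | hkpos
  · simp
  · rw [if_neg (by omega), if_neg (by omega)]
    ring

lemma key2 (n : ℕ) (hn : n ≠ 0) :
    ∑ k ∈ range (n+1), (if k = 0 then 0 else
      ((k:ℚ)^(k-1)/(k.factorial)) * (((n-k : ℕ):ℚ)^(n-k)/((n-k).factorial)))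
    = (n:ℚ)^n / (n.factorial) := by
  have h := key_identity n
  have hnn : (n:ℚ)^(n-1) * n = (n:ℚ)^n := by
    obtain ⟨m, rfl⟩ : ∃ m, n = m + 1 := ⟨n - 1, by omega⟩
    rw [show m+1-1 = m from rfl, ← pow_succ]
  rw [hnn] at h
  rw [← h, Finset.sum_div]
  refine Finset.sum_congr rfl fun k hk => ?_
  rcases Nat.eq_zero_or_pos k with rfl | hkpos
  · simp
  · rw [if_neg (by omega), if_neg (by omega)]
    have hk' : k ≤ n := by have := mem_range.mp hk; omega
    have hfac : ((n.factorial : ℚ)) = (n.choose k : ℚ) * k.factorial * (n-k).factorial := by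
      rw [← Nat.choose_mul_factorial_mul_factorial hk']
      push_cast
      ring
    have hbase : ((n:ℚ) - k) = ((n - k : ℕ) : ℚ) := by
      rw [Nat.cast_sub hk']
    rw [← hbase, hfac]
    have h1 : (k.factorial : ℚ) ≠ 0 := Nat.cast_ne_zero.mpr (Nat.factorial_ne_zero k)
    have h2 : ((n-k).factorial : ℚ) ≠ 0 := Nat.cast_ne_zero.mpr (Nat.factorial_ne_zero _)
    have h3 : (n.choose k : ℚ) ≠ 0 := by
      exact_mod_cast Nat.cast_ne_zero.mpr (Nat.choose_pos hk').ne'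
    field_simp

end AuxAbel

open PowerSeries

open Finset in
theorem inv_one_sub_treeSeries (y : PowerSeries ℚ)
    (hy : y * (1 - treeSeries) = 1) :
    y = PowerSeries.mk fun m => if m = 0 then 1 else (m : ℚ) ^ m / m.factorial := by
  set t : PowerSeries ℚ := PowerSeries.mk fun m => if m = 0 then 1 else (m : ℚ) ^ m / m.factorial with htdef
  have ht : t * (1 - treeSeries) = 1 := by
    ext n
    rw [PowerSeries.coeff_mul, Finset.Nat.sum_antidiagonal_eq_sum_range_succ_mk]
    rcases Nat.eq_zero_or_pos n with rfl | hn
    · simp [htdef, treeSeries]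
    · have hn' : n ≠ 0 := by omega
      rw [PowerSeries.coeff_one, if_neg hn']
      have hterm : ∀ p ∈ range (n+1),
          (coeff p) t * (coeff (n - p)) (1 - treeSeries)
          = (if p = n then (n:ℚ)^n / n.factorial else 0)
            - (if n - p = 0 then 0 else
                (((n-p:ℕ):ℚ)^(n-p-1)/((n-p).factorial)) * ((p:ℚ)^p/(p.factorial))) := by
        intro p hp
        have hp' : p ≤ n := by have := mem_range.mp hp; omega
        rw [map_sub, PowerSeries.coeff_one]
        simp only [htdef, treeSeries, PowerSeries.coeff_mk]
        by_cases hpn : p = n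
        · rw [hpn]
          simp [Nat.sub_self, hn']
        · have h1 : n - p ≠ 0 := by omega
          by_cases hp0 : p = 0
          · rw [hp0]
            rw [if_neg (show ¬(0:ℕ) = n from fun h => hn' h.symm)]
            simp [hn']
          · simp only [if_neg h1, if_neg hpn, if_neg hp0]
            ring
      rw [Finset.sum_congr rfl hterm, Finset.sum_sub_distrib, Finset.sum_ite_eq' (range (n+1)) n]
      rw [if_pos (self_mem_range_succ n)]
      have hsum : (∑ p ∈ range (n+1), (if n - p = 0 then 0 else
              (((n-p:ℕ):ℚ)^(n-p-1)/((n-p).factorial)) * ((p:ℚ)^p/(p.factorial))))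
          = ∑ k ∈ range (n+1), (if k = 0 then 0 else
              ((k:ℚ)^(k-1)/(k.factorial)) * (((n-k : ℕ):ℚ)^(n-k)/((n-k).factorial))) := by
        rw [← Finset.sum_range_reflect (fun (k:ℕ) => if k = 0 then 0 else
              ((k:ℚ)^(k-1)/(k.factorial)) * (((n-k : ℕ):ℚ)^(n-k)/((n-k).factorial))) (n+1)]
        refine Finset.sum_congr rfl fun p hp => ?_
        have hp' : p ≤ n := by have := mem_range.mp hp; omega
        simp only [show ∀ j, n+1-1-j = n-j from fun j => rfl]
        rcases eq_or_ne (n-p) 0 with h | h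
        · rw [if_pos h, if_pos h]
        · rw [if_neg h, if_neg h, show n - (n - p) = p from by omega]
      rw [hsum, key2 n hn']
      ring
  calc y = y * (t * (1 - treeSeries)) := by rw [ht, mul_one]
    _ = t * (y * (1 - treeSeries)) := by ring
    _ = t := by rw [hy, mul_one]
end

section
/- Let F_n(y₁,…,y_n; t) = Π_{i=1}^n y_i/(1 - y_i t) as a formal power series in t with coefficients in ℚ[y₁,…,y_n]. Then Σ over all ordered pairs (a,b) of distinct indices in {1,…,n} of [y_a³ y_b/(y_a - y_b)] · ∂F_{n-1}/∂y_a evaluated with the variables (y_a together with all variables other than y_a, y_b) equals (n-1) · ∂F_n/∂t. -/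
open MvPolynomial PowerSeries

/-- The series `y_i/(1 - y_i t) = ∑_{k≥0} y_i^{k+1} t^k`. -/
noncomputable def Gser (n : ℕ) (i : Fin n) : PowerSeries (MvPolynomial (Fin n) ℚ) :=
  PowerSeries.mk fun k => X i ^ (k + 1)

/-- Coefficientwise partial derivative `∂/∂y_a` of a power series in `t`
with polynomial coefficients. -/
noncomputable def Dy (n : ℕ) (a : Fin n)
    (f : PowerSeries (MvPolynomial (Fin n) ℚ)) :
    PowerSeries (MvPolynomial (Fin n) ℚ) :=
  PowerSeries.mk fun k => pderiv a (PowerSeries.coeff k f)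

/-- Base change of the coefficients into the field of rational functions. -/
noncomputable def toFrac (n : ℕ) :
    PowerSeries (MvPolynomial (Fin n) ℚ) →+*
      PowerSeries (FractionRing (MvPolynomial (Fin n) ℚ)) :=
  PowerSeries.map (algebraMap _ _)

-- auxiliary defs
noncomputable def xv (n : ℕ) (i : Fin n) : FractionRing (MvPolynomial (Fin n) ℚ) :=
  algebraMap (MvPolynomial (Fin n) ℚ) (FractionRing (MvPolynomial (Fin n) ℚ)) (X i)

noncomputable def gs (n : ℕ) (i : Fin n) :
    PowerSeries (FractionRing (MvPolynomial (Fin n) ℚ)) :=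
  toFrac n (Gser n i)

lemma toFrac_Gser (n : ℕ) (i : Fin n) : toFrac n (Gser n i) = gs n i := rfl

lemma coeff_gs (n : ℕ) (i : Fin n) (k : ℕ) :
    PowerSeries.coeff k (gs n i) = xv n i ^ (k + 1) := by
  simp [gs, toFrac, Gser, xv]

lemma xv_sub_ne (n : ℕ) {a b : Fin n} (h : a ≠ b) : xv n a - xv n b ≠ 0 := by
  rw [sub_ne_zero]
  simp only [xv]
  intro hh
  exact h (MvPolynomial.X_injective
    (IsFractionRing.injective (MvPolynomial (Fin n) ℚ) (FractionRing (MvPolynomial (Fin n) ℚ)) hh))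

-- generic Leibniz for finset products
lemma leibniz_prod {M ι : Type*} [CommRing M] (D : M → M) (h1 : D 1 = 0)
    (hmul : ∀ f g, D (f * g) = D f * g + f * D g) (S : Finset ι) (f : ι → M) [DecidableEq ι] :
    D (∏ i ∈ S, f i) = ∑ a ∈ S, D (f a) * ∏ i ∈ S.erase a, f i := by
  induction S using Finset.induction_on with
  | empty => simpa using h1
  | insert _ _ ha ih =>
    rename_i a s
    rw [Finset.prod_insert ha, hmul, ih, Finset.sum_insert ha, Finset.erase_insert ha,
      Finset.mul_sum]
    congr 1
    refine Finset.sum_congr rfl fun b hb => ?_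
    have hab : a ≠ b := fun h => ha (h ▸ hb)
    rw [Finset.erase_insert_of_ne hab, Finset.prod_insert (fun h => ha (Finset.mem_of_mem_erase h))]
    ring

lemma Dy_mul (n : ℕ) (a : Fin n) (f g : PowerSeries (MvPolynomial (Fin n) ℚ)) :
    Dy n a (f * g) = Dy n a f * g + f * Dy n a g := by
  ext k
  simp only [Dy, PowerSeries.coeff_mk, map_add, PowerSeries.coeff_mul, map_sum, pderiv_mul,
    Finset.sum_add_distrib]

lemma Dy_one (n : ℕ) (a : Fin n) : Dy n a 1 = 0 := by
  ext k
  simp only [Dy, PowerSeries.coeff_mk, PowerSeries.coeff_one, map_zero]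
  split <;> simp

lemma Dy_gser_ne (n : ℕ) {a i : Fin n} (h : i ≠ a) : Dy n a (Gser n i) = 0 := by
  ext k
  simp [Dy, Gser, pderiv_pow, pderiv_X_of_ne h]

lemma toFrac_Dy_gser (n : ℕ) (a : Fin n) :
    PowerSeries.C (xv n a) ^ 2 * toFrac n (Dy n a (Gser n a)) = gs n a ^ 2 := by
  ext k
  have h1 : PowerSeries.coeff k (toFrac n (Dy n a (Gser n a)))
      = (k+1) * xv n a ^ k := by
    simp [toFrac, Dy, Gser, pderiv_pow, pderiv_X_self, xv]
  rw [← map_pow, PowerSeries.coeff_C_mul, h1, pow_two (gs n a), PowerSeries.coeff_mul]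
  have : ∀ p ∈ Finset.HasAntidiagonal.antidiagonal k,
      PowerSeries.coeff p.1 (gs n a) * PowerSeries.coeff p.2 (gs n a)
        = xv n a ^ (k + 2) := by
    intro p hp
    rw [coeff_gs, coeff_gs, ← pow_add]
    congr 1
    have := Finset.HasAntidiagonal.mem_antidiagonal.mp hp
    omega
  rw [Finset.sum_congr rfl this, Finset.sum_const, Finset.Nat.card_antidiagonal]

  ring

lemma deriv_gs (n : ℕ) (a : Fin n) :
    PowerSeries.derivativeFun (gs n a) = gs n a ^ 2 := by
  ext k
  rw [show PowerSeries.derivativeFun (gs n a) = PowerSeries.derivative _ (gs n a) from rfl,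
    PowerSeries.coeff_derivative, coeff_gs, pow_two (gs n a), PowerSeries.coeff_mul]
  have : ∀ p ∈ Finset.HasAntidiagonal.antidiagonal k,
      PowerSeries.coeff p.1 (gs n a) * PowerSeries.coeff p.2 (gs n a)
        = xv n a ^ (k + 2) := by
    intro p hp
    rw [coeff_gs, coeff_gs, ← pow_add]
    congr 1
    have := Finset.HasAntidiagonal.mem_antidiagonal.mp hp
    omega
  rw [Finset.sum_congr rfl this, Finset.sum_const, Finset.Nat.card_antidiagonal]
  rw [nsmul_eq_mul]
  push_cast
  ring

lemma geom_rel (n : ℕ) (a b : Fin n) :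
    PowerSeries.C (xv n a - xv n b) * (gs n a * gs n b)
      = PowerSeries.C (xv n a * xv n b) * (gs n a - gs n b) := by
  ext k
  rw [PowerSeries.coeff_C_mul, PowerSeries.coeff_C_mul, PowerSeries.coeff_mul, map_sub,
    coeff_gs, coeff_gs]
  have h : ∀ p ∈ Finset.HasAntidiagonal.antidiagonal k,
      PowerSeries.coeff p.1 (gs n a) * PowerSeries.coeff p.2 (gs n b)
        = xv n a * xv n b * (xv n a ^ p.1 * xv n b ^ p.2) := by
    intro p _
    rw [coeff_gs, coeff_gs]
    ring
  rw [Finset.sum_congr rfl h, ← Finset.mul_sum,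
    Finset.Nat.sum_antidiagonal_eq_sum_range_succ_mk]
  have hg := geom_sum₂_mul (xv n a) (xv n b) (k + 1)
  have hs : ∑ i ∈ Finset.range (k + 1), xv n a ^ i * xv n b ^ (k - i)
      = ∑ i ∈ Finset.range (k + 1), xv n a ^ i * xv n b ^ (k + 1 - 1 - i) := by
    refine Finset.sum_congr rfl fun i hi => ?_
    congr 2
  rw [hs]
  linear_combination (xv n a * xv n b) * hg

lemma key_pair (n : ℕ) {a b : Fin n} (h : a ≠ b) :
    PowerSeries.C (xv n a * xv n b / (xv n a - xv n b)) * (gs n a ^ 2 - gs n b ^ 2)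
      = (gs n a + gs n b) * (gs n a * gs n b) := by
  have hd := xv_sub_ne n h
  have hC : (PowerSeries.C (R := FractionRing (MvPolynomial (Fin n) ℚ)) (xv n a - xv n b)) ≠ 0 := by
    intro h0
    apply hd
    have := congrArg (PowerSeries.constantCoeff) h0
    simpa using this
  apply mul_left_cancel₀ hC
  have hCr : PowerSeries.C (R := FractionRing (MvPolynomial (Fin n) ℚ)) (xv n a - xv n b) *
      PowerSeries.C (xv n a * xv n b / (xv n a - xv n b))
        = PowerSeries.C (xv n a * xv n b) := by
    rw [← map_mul, mul_div_cancel₀ _ hd]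
  calc PowerSeries.C (xv n a - xv n b) *
        (PowerSeries.C (xv n a * xv n b / (xv n a - xv n b)) * (gs n a ^ 2 - gs n b ^ 2))
      = (PowerSeries.C (xv n a - xv n b) *
          PowerSeries.C (xv n a * xv n b / (xv n a - xv n b))) *
          ((gs n a - gs n b) * (gs n a + gs n b)) := by ring
    _ = (PowerSeries.C (xv n a * xv n b) * (gs n a - gs n b)) * (gs n a + gs n b) := by
          rw [hCr]; ring
    _ = (PowerSeries.C (xv n a - xv n b) * (gs n a * gs n b)) * (gs n a + gs n b) := by
          rw [geom_rel]
    _ = PowerSeries.C (xv n a - xv n b) * ((gs n a + gs n b) * (gs n a * gs n b)) := by ring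

set_option maxHeartbeats 1000000 in
theorem sym_pde_for_product (n : ℕ) (hn : 2 ≤ n) :
    ∑ a : Fin n, ∑ b ∈ Finset.univ.erase a,
        PowerSeries.C (R := FractionRing (MvPolynomial (Fin n) ℚ))
            (algebraMap (MvPolynomial (Fin n) ℚ) _ (X a ^ 3 * X b) /
              algebraMap (MvPolynomial (Fin n) ℚ) _ (X a - X b)) *
          toFrac n (Dy n a (∏ i ∈ Finset.univ.erase b, Gser n i)) =
      PowerSeries.C (R := FractionRing (MvPolynomial (Fin n) ℚ)) ((n : _) - 1) *
        PowerSeries.derivativeFun (toFrac n (∏ i : Fin n, Gser n i)) := by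
  classical
  set K := FractionRing (MvPolynomial (Fin n) ℚ) with hKdef
  set R := PowerSeries K with hRdef
  set s : R := ∑ i : Fin n, gs n i with hs
  set F : R := ∏ i : Fin n, gs n i with hF
  -- the normalized term
  set f : Fin n → Fin n → R := fun a b =>
    PowerSeries.C (R := K) (xv n a * xv n b / (xv n a - xv n b)) * gs n a ^ 2 *
      ∏ i ∈ (Finset.univ.erase b).erase a, gs n i with hfdef
  -- Step 1 : each LHS term equals f a b
  have hterm : ∀ a : Fin n, ∀ b ∈ Finset.univ.erase a,
      PowerSeries.C (R := K)
          (algebraMap (MvPolynomial (Fin n) ℚ) _ (X a ^ 3 * X b) /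
            algebraMap (MvPolynomial (Fin n) ℚ) _ (X a - X b)) *
        toFrac n (Dy n a (∏ i ∈ Finset.univ.erase b, Gser n i)) = f a b := by
    intro a b hb
    have hba : b ≠ a := (Finset.mem_erase.mp hb).1
    have hab : a ≠ b := hba.symm
    have haeb : a ∈ Finset.univ.erase b := Finset.mem_erase.mpr ⟨hab, Finset.mem_univ a⟩
    have hDy : Dy n a (∏ i ∈ Finset.univ.erase b, Gser n i)
        = Dy n a (Gser n a) * ∏ i ∈ (Finset.univ.erase b).erase a, Gser n i := by
      rw [leibniz_prod (Dy n a) (Dy_one n a) (Dy_mul n a)]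
      rw [Finset.sum_eq_single a (fun j _ hja => by rw [Dy_gser_ne n hja, zero_mul])
        (fun hna => absurd haeb hna)]
    have hd : xv n a - xv n b ≠ 0 := xv_sub_ne n hab
    have hq : algebraMap (MvPolynomial (Fin n) ℚ) K (X a ^ 3 * X b) /
        algebraMap (MvPolynomial (Fin n) ℚ) K (X a - X b)
        = (xv n a * xv n b / (xv n a - xv n b)) * xv n a ^ 2 := by
      simp only [map_mul, map_pow, map_sub]
      rw [div_mul_eq_mul_div]
      congr 1
      simp only [xv]
      ring
    rw [hDy, map_mul (toFrac n), map_prod (toFrac n), hq, map_mul, map_pow, hfdef]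
    simp only [toFrac_Gser]
    have hkey := toFrac_Dy_gser n a
    set P : R := ∏ i ∈ (Finset.univ.erase b).erase a, gs n i
    calc PowerSeries.C (R := K) (xv n a * xv n b / (xv n a - xv n b)) * PowerSeries.C (R := K) (xv n a) ^ 2 *
          (toFrac n (Dy n a (Gser n a)) * P)
        = PowerSeries.C (R := K) (xv n a * xv n b / (xv n a - xv n b)) *
            (PowerSeries.C (R := K) (xv n a) ^ 2 * toFrac n (Dy n a (Gser n a))) * P := by ring
      _ = PowerSeries.C (R := K) (xv n a * xv n b / (xv n a - xv n b)) * gs n a ^ 2 * P := by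
            rw [hkey]
  rw [Finset.sum_congr rfl fun a _ => Finset.sum_congr rfl (hterm a)]
  -- Step 2 : RHS
  have h1 : PowerSeries.derivativeFun (1 : R) = 0 := by
    show PowerSeries.derivative K (1 : R) = 0
    rw [← map_one (PowerSeries.C (R := K)), PowerSeries.derivative_C]
  have hFmap : toFrac n (∏ i : Fin n, Gser n i) = F := by
    rw [map_prod]
    simp only [toFrac_Gser, hF]
  have hmul' : ∀ f g : R, PowerSeries.derivativeFun (f * g)
      = PowerSeries.derivativeFun f * g + f * PowerSeries.derivativeFun g := by
    intro f g
    rw [PowerSeries.derivativeFun_mul, smul_eq_mul, smul_eq_mul]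
    ring
  have hder : PowerSeries.derivativeFun F = s * F := by
    rw [hF, leibniz_prod _ h1 hmul', hs, Finset.sum_mul]
    refine Finset.sum_congr rfl fun a _ => ?_
    rw [deriv_gs, pow_two, mul_assoc, Finset.mul_prod_erase _ _ (Finset.mem_univ a)]
  rw [hFmap, hder]
  -- Step 3 : doubling
  have hswap : (∑ a : Fin n, ∑ b ∈ Finset.univ.erase a, f a b)
      = ∑ a : Fin n, ∑ b ∈ Finset.univ.erase a, f b a := by
    exact Finset.sum_comm' (by
      intro x y
      simp only [Finset.mem_univ, Finset.mem_erase, true_and, and_true]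
      exact ⟨fun h => h.symm, fun h => h.symm⟩)
  have hpair : ∀ a : Fin n, ∀ b ∈ Finset.univ.erase a, f a b + f b a = (gs n a + gs n b) * F := by
    intro a b hb
    have hba : b ≠ a := (Finset.mem_erase.mp hb).1
    have hab : a ≠ b := hba.symm
    have hP : ((Finset.univ.erase a).erase b : Finset (Fin n)) = (Finset.univ.erase b).erase a :=
      Finset.erase_right_comm
    have hr : xv n b * xv n a / (xv n b - xv n a)
        = -(xv n a * xv n b / (xv n a - xv n b)) := by
      rw [mul_comm (xv n b), ← neg_sub (xv n a), div_neg]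
    have hFfac : gs n a * gs n b * ∏ i ∈ (Finset.univ.erase b).erase a, gs n i = F := by
      rw [hF, ← Finset.mul_prod_erase _ _ (Finset.mem_univ b), mul_comm (gs n a), mul_assoc,
        Finset.mul_prod_erase _ _ (Finset.mem_erase.mpr ⟨hab, Finset.mem_univ a⟩)]
    rw [hfdef]
    simp only [hP, hr, map_neg]
    rw [show PowerSeries.C (R := K) (-(xv n a * xv n b / (xv n a - xv n b))) =
      -PowerSeries.C (R := K) (xv n a * xv n b / (xv n a - xv n b)) from map_neg (PowerSeries.C (R := K)) _]
    calc PowerSeries.C (R := K) (xv n a * xv n b / (xv n a - xv n b)) * gs n a ^ 2 *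
          ∏ i ∈ (Finset.univ.erase b).erase a, gs n i +
        -PowerSeries.C (R := K) (xv n a * xv n b / (xv n a - xv n b)) * gs n b ^ 2 *
          ∏ i ∈ (Finset.univ.erase b).erase a, gs n i
        = (PowerSeries.C (R := K) (xv n a * xv n b / (xv n a - xv n b)) * (gs n a ^ 2 - gs n b ^ 2)) *
            ∏ i ∈ (Finset.univ.erase b).erase a, gs n i := by ring
      _ = ((gs n a + gs n b) * (gs n a * gs n b)) *
            ∏ i ∈ (Finset.univ.erase b).erase a, gs n i := by rw [key_pair n hab]
      _ = (gs n a + gs n b) * F := by rw [← hFfac]; ring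
  have hcnt : ∀ a : Fin n, ∑ b ∈ Finset.univ.erase a, (gs n a + gs n b)
      = (n - 1) • gs n a + (s - gs n a) := by
    intro a
    rw [Finset.sum_add_distrib, Finset.sum_const, Finset.card_erase_of_mem (Finset.mem_univ a),
      Finset.card_univ, Fintype.card_fin, Finset.sum_erase_eq_sub (Finset.mem_univ a), hs]
  have hC : PowerSeries.C (R := K) ((n : K) - 1) = (n : R) - 1 := by
    rw [map_sub, map_natCast, map_one]
  have hdouble : (2 : R) * (∑ a : Fin n, ∑ b ∈ Finset.univ.erase a, f a b)
      = 2 * (PowerSeries.C (R := K) ((n : K) - 1) * (s * F)) := by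
    calc (2 : R) * (∑ a : Fin n, ∑ b ∈ Finset.univ.erase a, f a b)
        = (∑ a : Fin n, ∑ b ∈ Finset.univ.erase a, f a b)
          + (∑ a : Fin n, ∑ b ∈ Finset.univ.erase a, f b a) := by rw [← hswap]; ring
      _ = ∑ a : Fin n, ∑ b ∈ Finset.univ.erase a, (f a b + f b a) := by
          rw [← Finset.sum_add_distrib]
          refine Finset.sum_congr rfl fun a _ => ?_
          rw [← Finset.sum_add_distrib]
      _ = ∑ a : Fin n, ∑ b ∈ Finset.univ.erase a, (gs n a + gs n b) * F := by
          refine Finset.sum_congr rfl fun a _ => Finset.sum_congr rfl fun b hb => hpair a b hb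
      _ = ∑ a : Fin n, ((n - 1) • gs n a + (s - gs n a)) * F := by
          refine Finset.sum_congr rfl fun a _ => ?_
          rw [← Finset.sum_mul, hcnt a]
      _ = ((n - 1 : ℕ) • s + ((n : ℕ) • s - s)) * F := by
          rw [← Finset.sum_mul]
          congr 1
          rw [Finset.sum_add_distrib, Finset.sum_sub_distrib, ← Finset.smul_sum, ← hs,
            Finset.sum_const, Finset.card_univ, Fintype.card_fin]
      _ = 2 * (PowerSeries.C (R := K) ((n : K) - 1) * (s * F)) := by
          rw [hC, nsmul_eq_mul, nsmul_eq_mul, Nat.cast_sub (by omega : 1 ≤ n)]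
          push_cast
          ring
  have h2 : (2 : R) ≠ 0 := by
    intro h
    have := congrArg (PowerSeries.constantCoeff (R := K)) h
    simp only [map_ofNat, map_zero] at this
    norm_num at this
  calc (∑ a : Fin n, ∑ b ∈ Finset.univ.erase a, f a b)
      = PowerSeries.C (R := K) ((n : K) - 1) * (s * F) := mul_left_cancel₀ h2 hdouble
    _ = PowerSeries.C (R := K) ((n : K) - 1) * (s * F) := rfl
end
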